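/- arXiv:2602.21594 — 2 statements merged into one kernel-verified Lean document; each statement's English description precedes it below -/
import Mathlib

section
/- The function V(X,Y) = (X-1)²/X + Y - 1 - ln Y + Y/X - 1 - ln(Y/X) is radially unbounded on the open first quadrant: V(X,Y) → ∞ whenever X → 0⁺, Y → 0⁺, X → ∞, or Y → ∞. -/
/-! `V X Y` dominates both `X + X⁻¹ - 2 = (X - 1)² / X` and `Y - 1 - log Y`, since the remaining
summands are of the form `t - 1 - log t ≥ 0`. Each of these one-variable functions tends to `+∞` at
both ends of `(0, ∞)`, so its sublevel sets are contained in compact intervals `[a, b]` with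
`0 < a`, and the product of two such intervals is the required compact set. -/

noncomputable def V (X Y : ℝ) : ℝ :=
  (X - 1) ^ 2 / X + Y - 1 - Real.log Y + Y / X - 1 - Real.log (Y / X)

open Filter Set Topology

lemma exists_Icc_of_tendsto_atTop_nhdsGT_zero {f : ℝ → ℝ} (h₀ : Tendsto f (𝓝[>] 0) atTop)
    (h_top : Tendsto f atTop atTop) (M : ℝ) :
    ∃ a b, 0 < a ∧ ∀ t, 0 < t → f t ≤ M → t ∈ Icc a b := by
  obtain ⟨a, ha, h_small⟩ := mem_nhdsGT_iff_exists_Ioo_subset.mp (h₀.eventually_gt_atTop M)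
  obtain ⟨b, h_large⟩ := eventually_atTop.mp (h_top.eventually_gt_atTop M)
  refine ⟨a, b, ha, fun t ht hft => ⟨?_, ?_⟩⟩
  · by_contra! hta
    exact (h_small ⟨ht, hta⟩).not_ge hft
  · by_contra! htb
    exact (h_large t htb.le).not_ge hft

lemma tendsto_add_inv_sub_two_nhdsGT_zero :
    Tendsto (fun x : ℝ => x + x⁻¹ - 2) (𝓝[>] 0) atTop := by
  have h_id : Tendsto (fun x : ℝ => x) (𝓝[>] 0) (𝓝 0) := tendsto_nhdsWithin_of_tendsto_nhds
    continuous_id.continuousAt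
  exact ((h_id.add_atTop tendsto_inv_nhdsGT_zero).atTop_add
    (tendsto_const_nhds (x := (-2 : ℝ)))).congr fun x => by ring

lemma tendsto_add_inv_sub_two_atTop : Tendsto (fun x : ℝ => x + x⁻¹ - 2) atTop atTop := by
  refine tendsto_atTop_mono' _ ((eventually_gt_atTop 0).mono fun x hx => ?_)
    (tendsto_atTop_add_const_right _ (-2) tendsto_id)
  have := inv_pos.mpr hx
  simp only [id]
  linarith

lemma tendsto_sub_one_sub_log_nhdsGT_zero :
    Tendsto (fun y : ℝ => y - 1 - Real.log y) (𝓝[>] 0) atTop := by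
  have h_sub : Tendsto (fun y : ℝ => y - 1) (𝓝[>] 0) (𝓝 (0 - 1)) :=
    tendsto_nhdsWithin_of_tendsto_nhds ((continuous_id.sub continuous_const).tendsto 0)
  exact (h_sub.add_atTop (tendsto_neg_atBot_atTop.comp Real.tendsto_log_nhdsGT_zero)).congr
    fun y => by simp only [Function.comp_apply]; ring

lemma tendsto_sub_one_sub_log_atTop : Tendsto (fun y : ℝ => y - 1 - Real.log y) atTop atTop := by
  refine tendsto_atTop_mono' _ ((eventually_gt_atTop 0).mono fun y hy => ?_)
    (tendsto_atTop_add_const_right _ (-1) (tendsto_id.atTop_div_const two_pos))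
  -- `log y = log 2 + log (y / 2) ≤ log 2 + y / 2 - 1` and `log 2 < 1`
  have h_half := Real.log_le_sub_one_of_pos (half_pos hy)
  rw [Real.log_div hy.ne' two_ne_zero] at h_half
  have h_log_two : Real.log 2 < 1 := by linarith [Real.log_two_lt_d9]
  simp only [id]
  linarith

lemma sub_one_sub_log_nonneg {t : ℝ} (ht : 0 < t) : 0 ≤ t - 1 - Real.log t := by
  linarith [Real.log_le_sub_one_of_pos ht]

lemma add_inv_sub_two_le_V {X Y : ℝ} (hX : 0 < X) (hY : 0 < Y) : X + X⁻¹ - 2 ≤ V X Y := by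
  have h_sq : (X - 1) ^ 2 / X = X + X⁻¹ - 2 := by field_simp; ring
  have := sub_one_sub_log_nonneg hY
  have := sub_one_sub_log_nonneg (div_pos hY hX)
  unfold V
  linarith

lemma sub_one_sub_log_le_V {X Y : ℝ} (hX : 0 < X) (hY : 0 < Y) :
    Y - 1 - Real.log Y ≤ V X Y := by
  have := div_nonneg (sq_nonneg (X - 1)) hX.le
  have := sub_one_sub_log_nonneg (div_pos hY hX)
  unfold V
  linarith

theorem V_radially_unbounded :
    ∀ M : ℝ, ∃ K : Set (ℝ × ℝ), IsCompact K ∧ K ⊆ {p : ℝ × ℝ | 0 < p.1 ∧ 0 < p.2} ∧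
      ∀ p : ℝ × ℝ, 0 < p.1 → 0 < p.2 → p ∉ K → M < V p.1 p.2 := by
  intro M
  obtain ⟨a, b, ha, hX⟩ := exists_Icc_of_tendsto_atTop_nhdsGT_zero
    tendsto_add_inv_sub_two_nhdsGT_zero tendsto_add_inv_sub_two_atTop M
  obtain ⟨c, d, hc, hY⟩ := exists_Icc_of_tendsto_atTop_nhdsGT_zero
    tendsto_sub_one_sub_log_nhdsGT_zero tendsto_sub_one_sub_log_atTop M
  refine ⟨Icc a b ×ˢ Icc c d, isCompact_Icc.prod isCompact_Icc,
    fun p hp => ⟨ha.trans_le hp.1.1, hc.trans_le hp.2.1⟩, fun p hp₁ hp₂ hpK => ?_⟩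
  by_contra! hV
  exact hpK ⟨hX _ hp₁ ((add_inv_sub_two_le_V hp₁ hp₂).trans hV),
    hY _ hp₂ ((sub_one_sub_log_le_V hp₁ hp₂).trans hV)⟩
end

section
/- For V(X,Y) = Ψ(1/X) + Ψ(Y/X), the open-loop derivative along Ẋ = (1-Y)X, Ẏ = (X-U)Y equals L(X,Y) + G(X,Y)U with L(X,Y) = (-(X-1)² + Y(Y-X))/X and G(X,Y) = (X-Y)/X; moreover, whenever G(X,Y) > 0 (i.e., X > Y) and (X,Y) ≠ (1,1), L(X,Y) < 0. -/
noncomputable def Ψ (S : ℝ) : ℝ := S - 1 - Real.log S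

theorem hasDerivAt_Ψ {S : ℝ} (hS : S ≠ 0) : HasDerivAt Ψ (1 - S⁻¹) S :=
  ((hasDerivAt_id S).sub_const 1).sub (Real.hasDerivAt_log hS)

theorem hasDerivAt_const_div (c : ℝ) {x : ℝ} (hx : x ≠ 0) :
    HasDerivAt (fun x => c / x) (c * -(x ^ 2)⁻¹) x := by
  simpa only [div_eq_mul_inv] using (hasDerivAt_inv hx).const_mul c

theorem deriv_Ψ_one_div_add_Ψ_div {X Y : ℝ} (hX : X ≠ 0) (hY : Y ≠ 0) :
    deriv (fun x => Ψ (1 / x) + Ψ (Y / x)) X = (2 * X - 1 - Y) / X ^ 2 := by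
  have hV : HasDerivAt (fun x => Ψ (1 / x) + Ψ (Y / x)) _ X :=
    ((hasDerivAt_Ψ (one_div_ne_zero hX)).comp X (hasDerivAt_const_div 1 hX)).add
      ((hasDerivAt_Ψ (div_ne_zero hY hX)).comp X (hasDerivAt_const_div Y hX))
  rw [hV.deriv]
  field_simp
  ring

theorem deriv_Ψ_div {X Y : ℝ} (hX : X ≠ 0) (hY : Y ≠ 0) (c : ℝ) :
    deriv (fun y => c + Ψ (y / X)) Y = (Y - X) / (X * Y) := by
  have hV : HasDerivAt (fun y => c + Ψ (y / X)) _ Y :=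
    (HasDerivAt.comp (h := (· / X)) Y (hasDerivAt_Ψ (div_ne_zero hY hX))
      ((hasDerivAt_id' Y).div_const X)).const_add c
  rw [hV.deriv]
  field_simp

theorem drift_neg_of_lt {X Y : ℝ} (hX : 0 < X) (hY : 0 < Y) (hYX : Y < X) :
    (-(X - 1) ^ 2 + Y * (Y - X)) / X < 0 := by
  have hcross : Y * (Y - X) < 0 := mul_neg_of_pos_of_neg hY (by linarith)
  exact div_neg_of_neg_of_pos (by nlinarith [sq_nonneg (X - 1)]) hX

theorem V_backstepping_open_loop (X Y : ℝ) (hX : 0 < X) (hY : 0 < Y) :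
    (∀ U : ℝ,
      deriv (fun x => Ψ (1 / x) + Ψ (Y / x)) X * ((1 - Y) * X)
        + deriv (fun y => Ψ (1 / X) + Ψ (y / X)) Y * ((X - U) * Y)
        = (-(X - 1) ^ 2 + Y * (Y - X)) / X + ((X - Y) / X) * U)
    ∧ (Y < X → (X, Y) ≠ (1, 1) → (-(X - 1) ^ 2 + Y * (Y - X)) / X < 0) := by
  refine ⟨fun U => ?_, fun hYX _ => drift_neg_of_lt hX hY hYX⟩
  rw [deriv_Ψ_one_div_add_Ψ_div hX.ne' hY.ne', deriv_Ψ_div hX.ne' hY.ne']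
  field_simp
  ring
end
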